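/- Suppose A and B are real symmetric M×M matrices with A positive semidefinite and [A,B] = 0. Let C = B − (1/2)A² with eigenvalues c₁ ≤ ⋯ ≤ c_M counted with multiplicity, and assume c_m < c_{m+1}. Then P⋆ := 1_{(−∞,c_m]}(C) is the unique global minimizer of J over Gr(m,ℝ^M), and the matrices A, B, C, P⋆ pairwise commute. -/

import Mathlib

open Matrix Filter Topology

noncomputable section

/-- Commutator of matrices. -/
def commut {M : ℕ} (X Y : Matrix (Fin M) (Fin M) ℝ) : Matrix (Fin M) (Fin M) ℝ :=
  X * Y - Y * X

/-- The Grassmann manifold `Gr(m, ℝ^M)`. -/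
def Gr (M m : ℕ) (P : Matrix (Fin M) (Fin M) ℝ) : Prop :=
  P.IsSymm ∧ P * P = P ∧ P.trace = (m : ℝ)

/-- The cost function `J(P) = Tr(BP) - (1/2) Tr(APAP)`. -/
def Jfun {M : ℕ} (A B P : Matrix (Fin M) (Fin M) ℝ) : ℝ :=
  (B * P).trace - (1 / 2) * (A * P * A * P).trace

/-- `μ` is the non-decreasing enumeration of the eigenvalues of `S`, with multiplicity. -/
def sortedEigs {M : ℕ} (S : Matrix (Fin M) (Fin M) ℝ) (μ : Fin M → ℝ) : Prop :=
  Monotone μ ∧ ∃ U : Matrix (Fin M) (Fin M) ℝ, U * Uᵀ = 1 ∧ S = U * Matrix.diagonal μ * Uᵀ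

/-- `P = 1_{(-∞,t]}(S)`: the orthogonal projector onto the sum of the eigenspaces of the
symmetric matrix `S` associated with eigenvalues `≤ t`. -/
def IsSpectralProjLE {M : ℕ} (S : Matrix (Fin M) (Fin M) ℝ) (t : ℝ)
    (P : Matrix (Fin M) (Fin M) ℝ) : Prop :=
  P.IsSymm ∧ P * P = P ∧ S * P = P * S ∧
  (∀ v : Fin M → ℝ, P.mulVec v = v → S.mulVec v ⬝ᵥ v ≤ t * (v ⬝ᵥ v)) ∧
  (∀ v : Fin M → ℝ, v ≠ 0 → P.mulVec v = 0 → t * (v ⬝ᵥ v) < S.mulVec v ⬝ᵥ v)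

/-!
With `C = B - ½A² = U diag(c) Uᵀ`, one has `J(P) = Tr(CP) + ½‖(1 - P)AP‖²` for every orthogonal
projector `P`, so `J(P) ≥ Tr(CP)` with equality when `P` commutes with `A`. The diagonal of `UᵀPU`
is a vector of weights in `[0,1]` of total mass `m`, so `Tr(CP) = ∑ cᵢ (UᵀPU)ᵢᵢ` is at least the
sum of the `m` smallest eigenvalues, and thanks to the gap `c_m < c_{m+1}` equality forces these
weights to be the indicator of `{c ≤ c_m}`, hence `UᵀPU = diag(1_{c ≤ c_m})`, i.e. `P = P⋆`.
Finally `P⋆` is a function of `C` in the eigenbasis of `C`, so whatever commutes with `C`, such as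
`A` and `B`, commutes with `P⋆`; in particular `J(P⋆) = Tr(CP⋆)`.
-/

def sublevelIndicator {ι : Type*} (c : ι → ℝ) (t : ℝ) : ι → ℝ :=
  fun i => if c i ≤ t then 1 else 0

section SublevelIndicator

variable {ι : Type*} {c p : ι → ℝ} {t : ℝ}

lemma mul_sub_sublevelIndicator_nonneg {i : ι} (hp : p i ∈ Set.Icc 0 1) :
    0 ≤ (c i - t) * (p i - sublevelIndicator c t i) := by
  obtain ⟨hp0, hp1⟩ := hp
  unfold sublevelIndicator
  split_ifs with h <;> nlinarith

lemma sum_mul_sub_sum_mul_sublevelIndicator [Fintype ι]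
    (hsum : ∑ i, p i = ∑ i, sublevelIndicator c t i) :
    ∑ i, c i * p i - ∑ i, c i * sublevelIndicator c t i =
      ∑ i, (c i - t) * (p i - sublevelIndicator c t i) := by
  have hshift : ∑ i, t * (p i - sublevelIndicator c t i) = 0 := by
    rw [← Finset.mul_sum, Finset.sum_sub_distrib, hsum, sub_self, mul_zero]
  simp only [sub_mul, Finset.sum_sub_distrib, mul_sub] at hshift ⊢
  linarith

lemma sum_mul_sublevelIndicator_le [Fintype ι] (hp : ∀ i, p i ∈ Set.Icc 0 1)
    (hsum : ∑ i, p i = ∑ i, sublevelIndicator c t i) :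
    ∑ i, c i * sublevelIndicator c t i ≤ ∑ i, c i * p i := by
  have := Finset.sum_nonneg fun i (_ : i ∈ Finset.univ) =>
    mul_sub_sublevelIndicator_nonneg (c := c) (t := t) (hp i)
  linarith [sum_mul_sub_sum_mul_sublevelIndicator hsum]

lemma eq_sublevelIndicator_of_sum_mul_le [Fintype ι] (hp : ∀ i, p i ∈ Set.Icc 0 1)
    (hsum : ∑ i, p i = ∑ i, sublevelIndicator c t i)
    (hle : ∑ i, c i * p i ≤ ∑ i, c i * sublevelIndicator c t i) :
    p = sublevelIndicator c t := by
  have hnonneg : ∀ i, 0 ≤ (c i - t) * (p i - sublevelIndicator c t i) := fun i =>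
    mul_sub_sublevelIndicator_nonneg (hp i)
  have hterm : ∀ i, (c i - t) * (p i - sublevelIndicator c t i) = 0 := fun i =>
    (Finset.sum_eq_zero_iff_of_nonneg fun i _ => hnonneg i).mp
      (le_antisymm (by linarith [sum_mul_sub_sum_mul_sublevelIndicator hsum])
        (Finset.sum_nonneg fun i _ => hnonneg i)) i (Finset.mem_univ i)
  -- off the sublevel set `p` vanishes, so on it `p ≤ 1` leaves no room below the total mass
  have hdeficit : ∀ i, 0 ≤ sublevelIndicator c t i - p i := by
    intro i
    have := hterm i
    unfold sublevelIndicator at this ⊢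
    split_ifs at this ⊢ with h
    · linarith [(hp i).2]
    · rcases mul_eq_zero.mp this with h' | h' <;> linarith
  have hdeficit0 := (Finset.sum_eq_zero_iff_of_nonneg fun i _ => hdeficit i).mp
    (by rw [Finset.sum_sub_distrib, hsum, sub_self])
  funext i
  linarith [hdeficit0 i (Finset.mem_univ i)]

end SublevelIndicator

namespace Matrix

variable {n R : Type*} [Fintype n]

lemma commute_diagonal_comp [DecidableEq n] [CommRing R] [NoZeroDivisors R] {Y : Matrix n n R}
    {c : n → R} (h : Commute Y (diagonal c)) (f : R → R) : Commute Y (diagonal (f ∘ c)) := by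
  ext i j
  have hij := congrFun (congrFun h.eq i) j
  simp only [mul_diagonal, diagonal_mul, Function.comp_apply] at hij ⊢
  by_cases hc : c i = c j
  · rw [hc, mul_comm]
  · have : Y i j = 0 := by
      rw [mul_comm, ← sub_eq_zero, ← sub_mul] at hij
      exact (mul_eq_zero.mp hij).resolve_left (sub_ne_zero.mpr (Ne.symm hc))
    simp [this]

section Orthogonal

variable [DecidableEq n] [CommRing R] {U : Matrix n n R}

lemma transpose_mul_mul_mul_transpose_mul_mul (hU : U * Uᵀ = 1) (X Y : Matrix n n R) :
    Uᵀ * X * U * (Uᵀ * Y * U) = Uᵀ * (X * Y) * U := by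
  simp only [Matrix.mul_assoc]
  rw [← Matrix.mul_assoc U, hU, Matrix.one_mul]

lemma transpose_mul_mul_mul_transpose (hU : U * Uᵀ = 1) (X : Matrix n n R) :
    Uᵀ * (U * X * Uᵀ) * U = X := by
  have hU' : Uᵀ * U = 1 := mul_eq_one_comm.mp hU
  simp only [← Matrix.mul_assoc, hU', Matrix.one_mul]
  rw [Matrix.mul_assoc, hU', Matrix.mul_one]

lemma mul_transpose_mul_mul_transpose_mul (hU : U * Uᵀ = 1) (X : Matrix n n R) :
    U * (Uᵀ * X * U) * Uᵀ = X := by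
  simpa using transpose_mul_mul_mul_transpose (U := Uᵀ)
    (by rwa [transpose_transpose, mul_eq_one_comm]) X

lemma commute_transpose_mul_mul_iff (hU : U * Uᵀ = 1) {X Y : Matrix n n R} :
    Commute (Uᵀ * X * U) (Uᵀ * Y * U) ↔ Commute X Y := by
  refine ⟨fun h => ?_, fun h => ?_⟩
  · have := congrArg (fun Z => U * Z * Uᵀ) h.eq
    change X * Y = Y * X
    simpa only [transpose_mul_mul_mul_transpose_mul_mul hU,
      mul_transpose_mul_mul_transpose_mul hU] using this
  · simp only [Commute, SemiconjBy, transpose_mul_mul_mul_transpose_mul_mul hU, h.eq]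

lemma commute_conj_diagonal_comp [NoZeroDivisors R] (hU : U * Uᵀ = 1) {X : Matrix n n R}
    {c : n → R} (h : Commute X (U * diagonal c * Uᵀ)) (f : R → R) :
    Commute X (U * diagonal (f ∘ c) * Uᵀ) := by
  rw [← commute_transpose_mul_mul_iff hU, transpose_mul_mul_mul_transpose hU] at h ⊢
  exact commute_diagonal_comp h f

lemma IsIdempotentElem.transpose_mul_mul (hU : U * Uᵀ = 1) {P : Matrix n n R}
    (hP : IsIdempotentElem P) : IsIdempotentElem (Uᵀ * P * U) := by
  rw [IsIdempotentElem, transpose_mul_mul_mul_transpose_mul_mul hU, hP.eq]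

lemma trace_transpose_mul_mul (hU : U * Uᵀ = 1) (P : Matrix n n R) :
    (Uᵀ * P * U).trace = P.trace := by
  rw [trace_mul_comm, ← Matrix.mul_assoc, hU, Matrix.one_mul]

lemma trace_mul_mul_transpose_mul (U : Matrix n n R) (c : n → R) (P : Matrix n n R) :
    (U * diagonal c * Uᵀ * P).trace = ∑ i, c i * (Uᵀ * P * U) i i :=
  calc (U * diagonal c * Uᵀ * P).trace = (diagonal c * (Uᵀ * P * U)).trace := by
        rw [Matrix.mul_assoc, trace_mul_comm, ← Matrix.mul_assoc, trace_mul_comm]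
    _ = ∑ i, c i * (Uᵀ * P * U) i i := by simp [trace]

end Orthogonal

lemma IsSymm.transpose_mul_mul [CommSemiring R] {P : Matrix n n R} (hP : P.IsSymm)
    (U : Matrix n n R) : (Uᵀ * P * U).IsSymm := by
  simp [IsSymm, transpose_mul, hP.eq, Matrix.mul_assoc]

section Projection

variable {P : Matrix n n ℝ}

lemma IsSymm.apply_self_eq_sum_sq (hPs : P.IsSymm) (hPP : IsIdempotentElem P) (i : n) :
    P i i = ∑ j, P i j ^ 2 := by
  conv_lhs => rw [← hPP.eq]
  simp only [mul_apply, sq, hPs.apply]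

lemma IsSymm.apply_self_mem_Icc (hPs : P.IsSymm) (hPP : IsIdempotentElem P) (i : n) :
    P i i ∈ Set.Icc 0 1 := by
  have : P i i ^ 2 ≤ P i i :=
    calc P i i ^ 2 ≤ ∑ j, P i j ^ 2 :=
          Finset.single_le_sum (fun j _ => sq_nonneg (P i j)) (Finset.mem_univ i)
      _ = P i i := (hPs.apply_self_eq_sum_sq hPP i).symm
  constructor <;> nlinarith

lemma IsSymm.eq_diagonal_of_isIdempotentElem_apply_self [DecidableEq n] (hPs : P.IsSymm)
    (hPP : IsIdempotentElem P) (h : ∀ i, IsIdempotentElem (P i i)) : P = diagonal P.diag := by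
  ext i j
  rcases eq_or_ne i j with rfl | hij
  · simp
  · have hrow : ∑ k ∈ Finset.univ.erase i, P i k ^ 2 = 0 := by
      have := hPs.apply_self_eq_sum_sq hPP i
      rw [← Finset.add_sum_erase _ _ (Finset.mem_univ i), sq, (h i).eq] at this
      linarith
    rw [Finset.sum_eq_zero_iff_of_nonneg fun k _ => sq_nonneg _] at hrow
    simpa [hij] using hrow j (Finset.mem_erase.mpr ⟨hij.symm, Finset.mem_univ j⟩)

lemma trace_mul_mul_mul_mul_le [DecidableEq n] {A : Matrix n n ℝ} (hA : A.IsSymm)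
    (hPs : P.IsSymm) (hPP : IsIdempotentElem P) : (A * P * A * P).trace ≤ (A * A * P).trace := by
  set X := (1 - P) * A * P
  have hX : (Xᵀ * X).trace = (A * A * P).trace - (A * P * A * P).trace := by
    have h1 : Xᵀ * X = P * (A * A * P) - P * (A * P * A * P) := by
      simp only [X, transpose_mul, transpose_sub, transpose_one, hA.eq, hPs.eq]
      calc _ = P * A * ((1 - P) * (1 - P)) * A * P := by simp only [Matrix.mul_assoc]
        _ = P * (A * A * P) - P * (A * P * A * P) := by
            rw [hPP.one_sub.eq]
            simp only [Matrix.mul_sub, Matrix.sub_mul, Matrix.mul_one, Matrix.mul_assoc]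
    rw [h1, trace_sub, trace_mul_comm P, trace_mul_comm P, Matrix.mul_assoc _ P P, hPP.eq,
      Matrix.mul_assoc _ P P, hPP.eq]
  have hnonneg : 0 ≤ (Xᵀ * X).trace := by
    simpa using (posSemidef_conjTranspose_mul_self X).trace_nonneg
  linarith

variable {c : n → ℝ} {t : ℝ}

lemma IsSymm.sum_mul_sublevelIndicator_le (hPs : P.IsSymm) (hPP : IsIdempotentElem P)
    (htr : P.trace = ∑ i, sublevelIndicator c t i) :
    ∑ i, c i * sublevelIndicator c t i ≤ ∑ i, c i * P i i :=
  _root_.sum_mul_sublevelIndicator_le (hPs.apply_self_mem_Icc hPP) htr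

variable [DecidableEq n]

lemma IsSymm.eq_diagonal_sublevelIndicator (hPs : P.IsSymm) (hPP : IsIdempotentElem P)
    (htr : P.trace = ∑ i, sublevelIndicator c t i)
    (hle : ∑ i, c i * P i i ≤ ∑ i, c i * sublevelIndicator c t i) :
    P = diagonal (sublevelIndicator c t) := by
  have hdiag : P.diag = sublevelIndicator c t :=
    eq_sublevelIndicator_of_sum_mul_le (hPs.apply_self_mem_Icc hPP) htr hle
  refine (hPs.eq_diagonal_of_isIdempotentElem_apply_self hPP fun i => ?_).trans (by rw [hdiag])
  change IsIdempotentElem (P.diag i)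
  rw [hdiag, sublevelIndicator]
  split_ifs
  exacts [IsIdempotentElem.one, IsIdempotentElem.zero]

lemma trace_conj_diagonal_mul_conj_sublevelIndicator_le {U : Matrix n n ℝ} (hU : U * Uᵀ = 1)
    (hPs : P.IsSymm) (hPP : IsIdempotentElem P) (htr : P.trace = ∑ i, sublevelIndicator c t i) :
    (U * diagonal c * Uᵀ * (U * diagonal (sublevelIndicator c t) * Uᵀ)).trace ≤
      (U * diagonal c * Uᵀ * P).trace := by
  rw [trace_mul_mul_transpose_mul, trace_mul_mul_transpose_mul, transpose_mul_mul_mul_transpose hU]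
  simpa using (hPs.transpose_mul_mul U).sum_mul_sublevelIndicator_le
    (hPP.transpose_mul_mul hU) (by rwa [trace_transpose_mul_mul hU])

lemma eq_conj_sublevelIndicator_of_trace_conj_diagonal_mul_le {U : Matrix n n ℝ}
    (hU : U * Uᵀ = 1) (hPs : P.IsSymm) (hPP : IsIdempotentElem P)
    (htr : P.trace = ∑ i, sublevelIndicator c t i)
    (hle : (U * diagonal c * Uᵀ * P).trace ≤
      (U * diagonal c * Uᵀ * (U * diagonal (sublevelIndicator c t) * Uᵀ)).trace) :
    P = U * diagonal (sublevelIndicator c t) * Uᵀ := by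
  rw [trace_mul_mul_transpose_mul, trace_mul_mul_transpose_mul,
    transpose_mul_mul_mul_transpose hU] at hle
  rw [← mul_transpose_mul_mul_transpose_mul hU P,
    (hPs.transpose_mul_mul U).eq_diagonal_sublevelIndicator (hPP.transpose_mul_mul hU)
      (by rwa [trace_transpose_mul_mul hU]) (by simpa using hle)]

end Projection

lemma mulVec_mulVec_eq_smul_of_commute [CommSemiring R] {S Q : Matrix n n R}
    (hSQ : S * Q = Q * S) {v : n → R} {μ : R} (hv : S *ᵥ v = μ • v) :
    S *ᵥ (Q *ᵥ v) = μ • (Q *ᵥ v) := by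
  rw [mulVec_mulVec, hSQ, ← mulVec_mulVec, hv, mulVec_smul]

end Matrix

namespace IsSpectralProjLE

variable {M : ℕ} {S Q : Matrix (Fin M) (Fin M) ℝ} {t μ : ℝ} {v : Fin M → ℝ}

lemma mulVec_eq_self (hQ : IsSpectralProjLE S t Q) (hv : S *ᵥ v = μ • v) (hμ : μ ≤ t) :
    Q *ᵥ v = v := by
  obtain ⟨-, hQQ, hSQ, -, hker⟩ := hQ
  by_contra hne
  set w := v - Q *ᵥ v
  have hw : w ≠ 0 := sub_ne_zero.mpr (Ne.symm hne)
  have hQw : Q *ᵥ w = 0 := by simp [w, mulVec_sub, mulVec_mulVec, hQQ]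
  have hSw : S *ᵥ w = μ • w := by
    simp [w, mulVec_sub, hv, mulVec_mulVec_eq_smul_of_commute hSQ hv, smul_sub]
  have hpos : 0 < w ⬝ᵥ w := by simpa using dotProduct_self_star_pos_iff.mpr hw
  have := hker w hw hQw
  rw [hSw, smul_dotProduct, smul_eq_mul] at this
  nlinarith

lemma mulVec_eq_zero (hQ : IsSpectralProjLE S t Q) (hv : S *ᵥ v = μ • v) (hμ : t < μ) :
    Q *ᵥ v = 0 := by
  obtain ⟨-, hQQ, hSQ, hran, -⟩ := hQ
  by_contra hw
  have hpos : 0 < (Q *ᵥ v) ⬝ᵥ (Q *ᵥ v) := by simpa using dotProduct_self_star_pos_iff.mpr hw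
  have := hran (Q *ᵥ v) (by rw [mulVec_mulVec, hQQ])
  rw [mulVec_mulVec_eq_smul_of_commute hSQ hv, smul_dotProduct, smul_eq_mul] at this
  nlinarith

lemma eq_conj_diagonal (hQ : IsSpectralProjLE S t Q) {U : Matrix (Fin M) (Fin M) ℝ}
    {c : Fin M → ℝ} (hU : U * Uᵀ = 1) (hS : S = U * diagonal c * Uᵀ) :
    Q = U * diagonal (sublevelIndicator c t) * Uᵀ := by
  have hSU : S * U = U * diagonal c := by
    rw [hS, Matrix.mul_assoc _ Uᵀ, mul_eq_one_comm.mp hU, Matrix.mul_one]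
  have hQU : Q * U = U * diagonal (sublevelIndicator c t) := by
    refine ext_of_mulVec_single fun i => ?_
    have hcol : S *ᵥ (U *ᵥ Pi.single i 1) = c i • U *ᵥ Pi.single i 1 := by
      rw [mulVec_mulVec, hSU, ← mulVec_mulVec, diagonal_mulVec_single, ← mulVec_smul,
        ← Pi.single_smul, smul_eq_mul]
    rw [← mulVec_mulVec, ← mulVec_mulVec, diagonal_mulVec_single, mul_one, sublevelIndicator]
    split_ifs with h
    · exact hQ.mulVec_eq_self hcol h
    · rw [hQ.mulVec_eq_zero hcol (not_le.mp h), Pi.single_zero, mulVec_zero]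
  rw [← hQU, Matrix.mul_assoc, hU, Matrix.mul_one]

end IsSpectralProjLE

lemma sum_sublevelIndicator_of_monotone {M m : ℕ} {c : Fin M → ℝ} (hc : Monotone c)
    (h₁ : m - 1 < M) (h₂ : m < M) (hgap : c ⟨m - 1, h₁⟩ < c ⟨m, h₂⟩) :
    ∑ i, sublevelIndicator c (c ⟨m - 1, h₁⟩) i = m := by
  have hiff : ∀ i : Fin M, c i ≤ c ⟨m - 1, h₁⟩ ↔ (i : ℕ) < m := fun i =>
    ⟨fun h => by_contra fun hi =>
      (hgap.trans_le (hc (Fin.le_iff_val_le_val.mpr (not_lt.mp hi)))).not_ge h,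
    fun h => hc (Fin.le_iff_val_le_val.mpr (by simp only; omega))⟩
  simp only [sublevelIndicator, hiff, Finset.sum_boole, Fin.card_filter_val_lt]
  rw [min_eq_right h₂.le]

section Cost

variable {M : ℕ} {A B P : Matrix (Fin M) (Fin M) ℝ}

lemma Jfun_eq_trace_add (A B P : Matrix (Fin M) (Fin M) ℝ) :
    Jfun A B P = ((B - (1 / 2 : ℝ) • (A * A)) * P).trace +
      1 / 2 * ((A * A * P).trace - (A * P * A * P).trace) := by
  simp only [Jfun, Matrix.sub_mul, Matrix.smul_mul, trace_sub, trace_smul, smul_eq_mul]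
  ring

lemma trace_mul_le_Jfun (hA : A.IsSymm) (hPs : P.IsSymm) (hPP : IsIdempotentElem P) :
    ((B - (1 / 2 : ℝ) • (A * A)) * P).trace ≤ Jfun A B P := by
  rw [Jfun_eq_trace_add]
  linarith [trace_mul_mul_mul_mul_le hA hPs hPP]

lemma Jfun_eq_trace_mul_of_commute (hPP : IsIdempotentElem P) (h : Commute A P) :
    Jfun A B P = ((B - (1 / 2 : ℝ) • (A * A)) * P).trace := by
  have : A * P * A * P = A * A * P := by
    rw [Matrix.mul_assoc A P A, ← h.eq, ← Matrix.mul_assoc, Matrix.mul_assoc _ P P, hPP.eq]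
  rw [Jfun_eq_trace_add, this, sub_self, mul_zero, add_zero]

end Cost

/-- if `[A,B] = 0` and the sorted eigenvalues of `C = B − (1/2)A²` satisfy
`c_m < c_{m+1}`, then `P⋆ = 1_{(−∞,c_m]}(C)` is the unique global minimizer of `J` over
`Gr(m,ℝ^M)`, and `A`, `B`, `C`, `P⋆` pairwise commute. -/
theorem stmt_10 {M m : ℕ} (hm1 : 1 ≤ m) (hm2 : m ≤ M - 1)
    (A B : Matrix (Fin M) (Fin M) ℝ) (hA : A.IsSymm)
    (hAB : commut A B = 0)
    (c : Fin M → ℝ) (hc : sortedEigs (B - (1 / 2 : ℝ) • (A * A)) c)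
    (hgap : c ⟨m - 1, by omega⟩ < c ⟨m, by omega⟩)
    (Pstar : Matrix (Fin M) (Fin M) ℝ)
    (hPstar : IsSpectralProjLE (B - (1 / 2 : ℝ) • (A * A)) (c ⟨m - 1, by omega⟩) Pstar) :
    Gr M m Pstar ∧
      (∀ P : Matrix (Fin M) (Fin M) ℝ, Gr M m P → Jfun A B Pstar ≤ Jfun A B P) ∧
      (∀ P : Matrix (Fin M) (Fin M) ℝ, Gr M m P →
        (∀ Q : Matrix (Fin M) (Fin M) ℝ, Gr M m Q → Jfun A B P ≤ Jfun A B Q) →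
        P = Pstar) ∧
      commut A B = 0 ∧ commut A (B - (1 / 2 : ℝ) • (A * A)) = 0 ∧ commut A Pstar = 0 ∧
      commut B (B - (1 / 2 : ℝ) • (A * A)) = 0 ∧ commut B Pstar = 0 ∧
      commut (B - (1 / 2 : ℝ) • (A * A)) Pstar = 0 := by
  set C := B - (1 / 2 : ℝ) • (A * A)
  obtain ⟨hmono, U, hU, hC⟩ := hc
  have hQ := hPstar.eq_conj_diagonal hU hC
  have hcount := sum_sublevelIndicator_of_monotone hmono _ _ hgap
  have hGr : Gr M m Pstar := ⟨hPstar.1, hPstar.2.1, by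
    rw [hQ, ← trace_transpose_mul_mul hU, transpose_mul_mul_mul_transpose hU, trace_diagonal,
      hcount]⟩
  have hAB' : Commute A B := sub_eq_zero.mp hAB
  have hAC : Commute A C := hAB'.sub_right (((Commute.refl A).mul_right (.refl A)).smul_right _)
  have hBC : Commute B C :=
    (Commute.refl B).sub_right ((hAB'.symm.mul_right hAB'.symm).smul_right _)
  have hXQ : ∀ X, Commute X C → Commute X Pstar := fun X hX => by
    rw [hC] at hX
    rw [hQ]
    exact commute_conj_diagonal_comp hU hX fun x => if x ≤ c ⟨m - 1, _⟩ then 1 else 0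
  have hJQ : Jfun A B Pstar = (C * Pstar).trace :=
    Jfun_eq_trace_mul_of_commute hPstar.2.1 (hXQ A hAC)
  have htr : ∀ P, Gr M m P → P.trace = ∑ i, sublevelIndicator c (c ⟨m - 1, _⟩) i :=
    fun P hP => hP.2.2.trans hcount.symm
  refine ⟨hGr, fun P hP => ?_, fun P hP hPmin => ?_, hAB, sub_eq_zero.mpr hAC,
    sub_eq_zero.mpr (hXQ A hAC), sub_eq_zero.mpr hBC, sub_eq_zero.mpr (hXQ B hBC),
    sub_eq_zero.mpr hPstar.2.2.1⟩
  · calc Jfun A B Pstar = (C * Pstar).trace := hJQ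
      _ ≤ (C * P).trace := by
        rw [hC, hQ]
        exact trace_conj_diagonal_mul_conj_sublevelIndicator_le hU hP.1 hP.2.1 (htr P hP)
      _ ≤ Jfun A B P := trace_mul_le_Jfun hA hP.1 hP.2.1
  · have hle : (C * P).trace ≤ (C * Pstar).trace :=
      (trace_mul_le_Jfun hA hP.1 hP.2.1).trans (hJQ ▸ hPmin Pstar hGr)
    rw [hC, hQ] at hle
    rw [hQ]
    exact eq_conj_sublevelIndicator_of_trace_conj_diagonal_mul_le hU hP.1 hP.2.1 (htr P hP) hle
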